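/- Finite partition energy implies absolute continuity with L² derivative: let T > 0 and let W : [0,T] → ℝ be continuous with W(0) = 0, and suppose S := sup Σ_{i=0}^{k−1} (W(t_{i+1}) − W(t_i))²/(2(t_{i+1} − t_i)) < ∞, where the supremum is over all k ∈ ℕ and all partitions 0 = t₀ < t₁ < ⋯ < t_k ≤ T. Then there exists a measurable function f : ℝ → ℝ with ∫₀^T f(s)² ds < ∞ such that W(t) = ∫₀^t f(s) ds for every t ∈ [0,T], and moreover (1/2)∫₀^T f(s)² ds = S. -/

import Mathlib

/-
The slopes of `W` on the dyadic grid of mesh `T / 2ⁿ` form step functions `fₙ`. Since `fₘ`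
integrates to the increments of `W` over every cell of a coarser grid, `⟪fₙ, fₘ⟫ = 2 Eₙ` in
`L²(0, T]` for `n ≤ m`, where `Eₙ ≤ S` is the energy of the dyadic partition. Hence
`‖fₘ - fₙ‖² = 2 (Eₘ - Eₙ)`, so `(fₙ)` is Cauchy; its limit `f` integrates to the increments of
`W` between dyadic points, hence everywhere by continuity, and `½ ‖f‖² = lim Eₙ ≤ S`.
Conversely, Cauchy–Schwarz on each interval bounds every partition energy by `½ ‖f‖²`.
-/

open MeasureTheory Filter Set intervalIntegral
open scoped RealInnerProductSpace Topology

theorem Fin.sum_succ_sub_castSucc {M : Type*} [AddCommGroup M] :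
    ∀ {k : ℕ} (g : Fin (k + 1) → M), ∑ i : Fin k, (g i.succ - g i.castSucc) = g (Fin.last k) - g 0
  | 0, g => by simp
  | k + 1, g => by
    rw [Fin.sum_univ_castSucc]
    simp only [Fin.succ_castSucc]
    rw [Fin.sum_succ_sub_castSucc fun i => g i.castSucc, Fin.succ_last, Fin.castSucc_zero]
    abel

theorem sq_setIntegral_le_measureReal_mul {α : Type*} [MeasurableSpace α] {μ : Measure α}
    {s : Set α} {g : α → ℝ} (hs : μ s ≠ ⊤) (hg : IntegrableOn g s μ)
    (hg2 : IntegrableOn (fun x => g x ^ 2) s μ) :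
    (∫ x in s, g x ∂μ) ^ 2 ≤ μ.real s * ∫ x in s, g x ^ 2 ∂μ := by
  rcases eq_or_ne (μ s) 0 with h0 | h0
  · simp [Measure.restrict_eq_zero.mpr h0]
  have hpos : 0 < μ.real s := ENNReal.toReal_pos h0 hs
  have := (even_two.convexOn_pow (𝕜 := ℝ)).map_set_average_le (continuous_pow 2).continuousOn
    isClosed_univ h0 hs (by simp) hg hg2
  simp only [setAverage_eq, smul_eq_mul] at this
  rw [mul_pow, inv_pow, inv_mul_le_iff₀ (by positivity)] at this
  exact this.trans_eq (by field_simp)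

theorem sq_intervalIntegral_le_mul {g : ℝ → ℝ} {a b : ℝ} (hab : a ≤ b)
    (hg : IntervalIntegrable g volume a b)
    (hg2 : IntervalIntegrable (fun x => g x ^ 2) volume a b) :
    (∫ x in a..b, g x) ^ 2 ≤ (b - a) * ∫ x in a..b, g x ^ 2 := by
  rw [integral_of_le hab, integral_of_le hab, ← Real.volume_real_Ioc_of_le hab]
  exact sq_setIntegral_le_measureReal_mul measure_Ioc_lt_top.ne hg.1 hg2.1

theorem cauchySeq_of_inner_eq_norm_sq {E : Type*} [NormedAddCommGroup E] [InnerProductSpace ℝ E]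
    {F : ℕ → E} (hF : ∀ n m, n ≤ m → ⟪F n, F m⟫ = ‖F n‖ ^ 2)
    (hbdd : BddAbove (range fun n => ‖F n‖ ^ 2)) : CauchySeq F := by
  have hsub : ∀ n m, n ≤ m → ‖F m - F n‖ ^ 2 = ‖F m‖ ^ 2 - ‖F n‖ ^ 2 := fun n m h => by
    rw [norm_sub_sq_real, real_inner_comm, hF n m h]; ring
  have hmono : Monotone fun n => ‖F n‖ ^ 2 := fun n m h =>
    sub_nonneg.mp (hsub n m h ▸ sq_nonneg _)
  rw [Metric.cauchySeq_iff']
  intro ε hε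
  obtain ⟨N, hN⟩ := (tendsto_atTop_ciSup hmono hbdd).eventually
    (lt_mem_nhds (sub_lt_self _ (pow_pos hε 2))) |>.exists_forall_of_atTop
  refine ⟨N, fun n hn => lt_of_pow_lt_pow_left₀ 2 hε.le ?_⟩
  rw [dist_eq_norm, hsub N n hn]
  linarith [hN N le_rfl, le_ciSup hbdd n]

theorem tendsto_setIntegral_of_tendsto_L2 {α ι : Type*} [MeasurableSpace α] {μ : Measure α}
    {l : Filter ι} {F : ι → Lp ℝ 2 μ} {G : Lp ℝ 2 μ} (hF : Tendsto F l (𝓝 G)) {s : Set α}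
    (hs : MeasurableSet s) (hμs : μ s ≠ ⊤) :
    Tendsto (fun i => ∫ x in s, F i x ∂μ) l (𝓝 (∫ x in s, G x ∂μ)) := by
  simp_rw [← L2.inner_indicatorConstLp_one hs hμs]
  exact tendsto_const_nhds.inner hF

noncomputable def partitionEnergy (W : ℝ → ℝ) {k : ℕ} (t : Fin (k + 1) → ℝ) : ℝ :=
  ∑ i : Fin k, (W (t i.succ) - W (t i.castSucc)) ^ 2 / (2 * (t i.succ - t i.castSucc))

theorem partitionEnergy_le_of_eq_primitive {W φ : ℝ → ℝ} {a b : ℝ} {k : ℕ}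
    {t : Fin (k + 1) → ℝ} (ht : StrictMono t) (ha : a ≤ t 0) (hb : t (Fin.last k) ≤ b)
    (hφ : IntervalIntegrable φ volume a b)
    (hφ2 : IntervalIntegrable (fun x => φ x ^ 2) volume a b)
    (hW : ∀ x ∈ Icc a b, W x = ∫ s in a..x, φ s) :
    partitionEnergy W t ≤ 1 / 2 * ∫ s in a..b, φ s ^ 2 := by
  have hmem : ∀ i, t i ∈ Icc a b := fun i =>
    ⟨ha.trans (ht.monotone (Fin.zero_le i)), (ht.monotone (Fin.le_last i)).trans hb⟩
  have haI : a ∈ Icc a b := left_mem_Icc.mpr ((hmem 0).1.trans (hmem 0).2)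
  have hint : ∀ {f : ℝ → ℝ}, IntervalIntegrable f volume a b → ∀ {x y}, x ∈ Icc a b →
      y ∈ Icc a b → IntervalIntegrable f volume x y := fun hf _ _ hx hy =>
    hf.mono_set (uIcc_subset_uIcc (Icc_subset_uIcc hx) (Icc_subset_uIcc hy))
  set Q : ℝ → ℝ := fun x => ∫ s in a..x, φ s ^ 2
  have hterm : ∀ i : Fin k, (W (t i.succ) - W (t i.castSucc)) ^ 2 /
      (2 * (t i.succ - t i.castSucc)) ≤ (Q (t i.succ) - Q (t i.castSucc)) / 2 := by
    intro i
    have hx := hmem i.castSucc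
    have hy := hmem i.succ
    have hlt : t i.castSucc < t i.succ := ht i.castSucc_lt_succ
    rw [hW _ hx, hW _ hy, integral_interval_sub_left (hint hφ haI hy) (hint hφ haI hx),
      integral_interval_sub_left (hint hφ2 haI hy) (hint hφ2 haI hx),
      div_le_div_iff₀ (by linarith) two_pos]
    nlinarith [sq_intervalIntegral_le_mul hlt.le (hint hφ hx hy) (hint hφ2 hx hy)]
  have hQ : Q (t (Fin.last k)) - Q (t 0) ≤ Q b := by
    rw [integral_interval_sub_left (hint hφ2 haI (hmem _)) (hint hφ2 haI (hmem 0))]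
    exact integral_mono_interval (hmem 0).1 (ht.monotone (Fin.zero_le _)) hb
      (Eventually.of_forall fun x => sq_nonneg (φ x)) hφ2
  calc partitionEnergy W t ≤ ∑ i : Fin k, (Q (t i.succ) - Q (t i.castSucc)) / 2 :=
        Finset.sum_le_sum fun i _ => hterm i
    _ = (Q (t (Fin.last k)) - Q (t 0)) / 2 := by
        rw [← Finset.sum_div, Fin.sum_succ_sub_castSucc fun i => Q (t i)]
    _ ≤ 1 / 2 * Q b := by linarith

noncomputable def dyadicPoint (T : ℝ) (n i : ℕ) : ℝ := T * i / 2 ^ n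

noncomputable def dyadicSlope (T : ℝ) (W : ℝ → ℝ) (n i : ℕ) : ℝ :=
  (W (dyadicPoint T n (i + 1)) - W (dyadicPoint T n i)) / (T / 2 ^ n)

noncomputable def dyadicStep (T : ℝ) (W : ℝ → ℝ) (n : ℕ) (s : ℝ) : ℝ :=
  ∑ i ∈ Finset.range (2 ^ n),
    (Ioc (dyadicPoint T n i) (dyadicPoint T n (i + 1))).indicator (fun _ => dyadicSlope T W n i) s

noncomputable def dyadicEnergy (T : ℝ) (W : ℝ → ℝ) (n : ℕ) : ℝ :=
  partitionEnergy W fun i : Fin (2 ^ n + 1) => dyadicPoint T n i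

section Dyadic

variable {T : ℝ}

@[simp] theorem dyadicPoint_zero (T : ℝ) (n : ℕ) : dyadicPoint T n 0 = 0 := by
  simp [dyadicPoint]

@[simp] theorem dyadicPoint_two_pow (T : ℝ) (n : ℕ) : dyadicPoint T n (2 ^ n) = T := by
  simp [dyadicPoint]

theorem dyadicPoint_succ_sub (T : ℝ) (n i : ℕ) :
    dyadicPoint T n (i + 1) - dyadicPoint T n i = T / 2 ^ n := by
  simp only [dyadicPoint]; push_cast; ring

theorem dyadicPoint_mul_two_pow (T : ℝ) (n k j : ℕ) :
    dyadicPoint T (n + k) (j * 2 ^ k) = dyadicPoint T n j := by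
  simp only [dyadicPoint]; push_cast; rw [pow_add]; field_simp

theorem strictMono_dyadicPoint (hT : 0 < T) (n : ℕ) : StrictMono (dyadicPoint T n) := fun i j hij =>
  div_lt_div_of_pos_right (mul_lt_mul_of_pos_left (Nat.cast_lt.mpr hij) hT) (by positivity)

theorem dyadicPoint_mem_Icc (hT : 0 < T) {n j : ℕ} (hj : j ≤ 2 ^ n) :
    dyadicPoint T n j ∈ Icc 0 T := by
  have hmono := (strictMono_dyadicPoint hT n).monotone
  exact ⟨(dyadicPoint_zero T n).symm.trans_le (hmono j.zero_le),
    (hmono hj).trans_eq (dyadicPoint_two_pow T n)⟩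

theorem tendsto_dyadicPoint_floor (hT : 0 < T) {t : ℝ} (ht : 0 ≤ t) :
    Tendsto (fun n => dyadicPoint T n ⌊t / T * 2 ^ n⌋₊) atTop (𝓝 t) := by
  have h := ((tendsto_nat_floor_mul_div_atTop (div_nonneg ht hT.le)).comp
    (tendsto_pow_atTop_atTop_of_one_lt one_lt_two)).const_mul T
  rw [mul_div_cancel₀ t hT.ne'] at h
  refine h.congr fun n => ?_
  simp [dyadicPoint, mul_div_assoc]

theorem eqOn_Icc_of_eq_dyadicPoint (hT : 0 < T) {f g : ℝ → ℝ} (hf : ContinuousOn f (Icc 0 T))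
    (hg : ContinuousOn g (Icc 0 T))
    (h : ∀ n j, j ≤ 2 ^ n → f (dyadicPoint T n j) = g (dyadicPoint T n j)) :
    EqOn f g (Icc 0 T) := by
  refine EqOn.of_subset_closure (s := {x | ∃ n j, j ≤ 2 ^ n ∧ dyadicPoint T n j = x})
    ?_ hf hg ?_ ?_
  · rintro _ ⟨n, j, hj, rfl⟩
    exact h n j hj
  · rintro _ ⟨n, j, hj, rfl⟩
    exact dyadicPoint_mem_Icc hT hj
  · rintro t ⟨ht0, htT⟩
    have hfloor : ∀ n : ℕ, ⌊t / T * 2 ^ n⌋₊ ≤ 2 ^ n := fun n => Nat.floor_le_of_le <| by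
      push_cast
      exact mul_le_of_le_one_left (by positivity) ((div_le_one hT).mpr htT)
    exact mem_closure_of_tendsto (tendsto_dyadicPoint_floor hT ht0)
      (Eventually.of_forall fun n => ⟨n, _, hfloor n, rfl⟩)

end Dyadic

section Step

variable {T : ℝ} {W : ℝ → ℝ} {n : ℕ}

theorem dyadicStep_eq_dyadicSlope (hT : 0 < T) {i : ℕ} (hi : i < 2 ^ n) {s : ℝ}
    (hs : s ∈ Ioc (dyadicPoint T n i) (dyadicPoint T n (i + 1))) :
    dyadicStep T W n s = dyadicSlope T W n i := by
  have hmono := (strictMono_dyadicPoint hT n).monotone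
  rw [dyadicStep, Finset.sum_eq_single_of_mem i (Finset.mem_range.mpr hi), indicator_of_mem hs]
  intro j _ hji
  refine indicator_of_notMem (fun hsj => ?_) _
  rcases hji.lt_or_gt with h | h
  · exact (hsj.2.trans (hmono h)).not_gt hs.1
  · exact (hs.2.trans (hmono h)).not_gt hsj.1

theorem integrable_dyadicStep (T : ℝ) (W : ℝ → ℝ) (n : ℕ) : Integrable (dyadicStep T W n) :=
  integrable_finsetSum _ fun _ _ =>
    (integrable_indicator_iff measurableSet_Ioc).mpr (integrableOn_const measure_Ioc_lt_top.ne)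

theorem memLp_dyadicStep {μ : Measure ℝ} [IsFiniteMeasure μ] (T : ℝ) (W : ℝ → ℝ) (n : ℕ) :
    MemLp (dyadicStep T W n) 2 μ :=
  memLp_finsetSum _ fun _ _ => (memLp_const _).indicator measurableSet_Ioc

theorem intervalIntegral_dyadicStep_cell (hT : 0 < T) {i : ℕ} (hi : i < 2 ^ n) :
    ∫ x in dyadicPoint T n i..dyadicPoint T n (i + 1), dyadicStep T W n x
      = W (dyadicPoint T n (i + 1)) - W (dyadicPoint T n i) := by
  have hle := (strictMono_dyadicPoint hT n).monotone i.le_succ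
  rw [integral_of_le hle, setIntegral_congr_fun measurableSet_Ioc
    fun s hs => dyadicStep_eq_dyadicSlope hT hi hs, setIntegral_const,
    Real.volume_real_Ioc_of_le hle, dyadicPoint_succ_sub, smul_eq_mul, dyadicSlope]
  field_simp

theorem intervalIntegral_dyadicStep_self (hT : 0 < T) {j : ℕ} (hj : j ≤ 2 ^ n) :
    ∫ x in 0..dyadicPoint T n j, dyadicStep T W n x = W (dyadicPoint T n j) - W 0 := by
  rw [← dyadicPoint_zero T n, ← sum_integral_adjacent_intervals
    fun _ _ => (integrable_dyadicStep T W n).intervalIntegrable,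
    ← Finset.sum_range_sub fun i => W (dyadicPoint T n i)]
  exact Finset.sum_congr rfl fun i hi =>
    intervalIntegral_dyadicStep_cell hT ((Finset.mem_range.mp hi).trans_le hj)

theorem intervalIntegral_dyadicStep_of_le (hT : 0 < T) {m j : ℕ} (hnm : n ≤ m) (hj : j ≤ 2 ^ n) :
    ∫ x in 0..dyadicPoint T n j, dyadicStep T W m x = W (dyadicPoint T n j) - W 0 := by
  obtain ⟨k, rfl⟩ := Nat.exists_eq_add_of_le hnm
  rw [← dyadicPoint_mul_two_pow T n k j]
  exact intervalIntegral_dyadicStep_self hT (by rw [pow_add]; exact Nat.mul_le_mul_right _ hj)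

theorem intervalIntegral_dyadicStep_cell_of_le (hT : 0 < T) {m i : ℕ} (hnm : n ≤ m)
    (hi : i < 2 ^ n) :
    ∫ x in dyadicPoint T n i..dyadicPoint T n (i + 1), dyadicStep T W m x
      = W (dyadicPoint T n (i + 1)) - W (dyadicPoint T n i) := by
  have hint : ∀ b, IntervalIntegrable (dyadicStep T W m) volume 0 b := fun _ =>
    (integrable_dyadicStep T W m).intervalIntegrable
  rw [← integral_interval_sub_left (hint _) (hint _), intervalIntegral_dyadicStep_of_le hT hnm hi,
    intervalIntegral_dyadicStep_of_le hT hnm hi.le]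
  ring

theorem dyadicStep_mul_eq_sum (g : ℝ → ℝ) :
    (fun s => dyadicStep T W n s * g s) = fun s => ∑ i ∈ Finset.range (2 ^ n),
      (Ioc (dyadicPoint T n i) (dyadicPoint T n (i + 1))).indicator
        (fun x => dyadicSlope T W n i * g x) s := by
  ext s
  simp only [dyadicStep, Finset.sum_mul, indicator_mul_left]

theorem integral_dyadicStep_mul {μ : Measure ℝ} {g : ℝ → ℝ}
    (hg : ∀ i, IntegrableOn g (Ioc (dyadicPoint T n i) (dyadicPoint T n (i + 1))) μ) :
    ∫ s, dyadicStep T W n s * g s ∂μ = ∑ i ∈ Finset.range (2 ^ n),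
      dyadicSlope T W n i * ∫ s in Ioc (dyadicPoint T n i) (dyadicPoint T n (i + 1)), g s ∂μ := by
  rw [dyadicStep_mul_eq_sum, integral_finsetSum _ fun i _ =>
    (integrable_indicator_iff measurableSet_Ioc).mpr ((hg i).const_mul _)]
  simp only [MeasureTheory.integral_indicator measurableSet_Ioc, MeasureTheory.integral_const_mul]

theorem dyadicEnergy_eq_sum (T : ℝ) (W : ℝ → ℝ) (n : ℕ) :
    dyadicEnergy T W n = ∑ i ∈ Finset.range (2 ^ n),
      (W (dyadicPoint T n (i + 1)) - W (dyadicPoint T n i)) ^ 2 / (2 * (T / 2 ^ n)) := by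
  simp only [dyadicEnergy, partitionEnergy, Fin.val_succ, Fin.val_castSucc, dyadicPoint_succ_sub]
  exact Fin.sum_univ_eq_sum_range (fun i =>
    (W (dyadicPoint T n (i + 1)) - W (dyadicPoint T n i)) ^ 2 / (2 * (T / 2 ^ n))) _

theorem integral_dyadicStep_mul_dyadicStep (hT : 0 < T) {m : ℕ} (hnm : n ≤ m) :
    ∫ s, dyadicStep T W n s * dyadicStep T W m s ∂volume.restrict (Ioc 0 T)
      = 2 * dyadicEnergy T W n := by
  rw [integral_dyadicStep_mul fun i => (integrable_dyadicStep T W m).restrict.restrict,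
    dyadicEnergy_eq_sum, Finset.mul_sum]
  refine Finset.sum_congr rfl fun i hi => ?_
  have hi := Finset.mem_range.mp hi
  have hcell : Ioc (dyadicPoint T n i) (dyadicPoint T n (i + 1)) ⊆ Ioc 0 T :=
    Ioc_subset_Ioc (dyadicPoint_mem_Icc hT hi.le).1 (dyadicPoint_mem_Icc hT hi).2
  rw [Measure.restrict_restrict measurableSet_Ioc, inter_eq_left.mpr hcell,
    ← integral_of_le ((strictMono_dyadicPoint hT n).monotone i.le_succ),
    intervalIntegral_dyadicStep_cell_of_le hT hnm hi, dyadicSlope]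
  field_simp

end Step

section L2

variable {T : ℝ} {W : ℝ → ℝ}

noncomputable def dyadicStepLp (T : ℝ) (W : ℝ → ℝ) (n : ℕ) : Lp ℝ 2 (volume.restrict (Ioc 0 T)) :=
  (memLp_dyadicStep T W n).toLp _

theorem inner_dyadicStepLp (hT : 0 < T) {n m : ℕ} (hnm : n ≤ m) :
    ⟪dyadicStepLp T W n, dyadicStepLp T W m⟫ = 2 * dyadicEnergy T W n := by
  rw [L2.inner_def, ← integral_dyadicStep_mul_dyadicStep hT hnm]
  refine integral_congr_ae ?_
  filter_upwards [(memLp_dyadicStep T W n).coeFn_toLp, (memLp_dyadicStep T W m).coeFn_toLp]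
    with x hn hm
  simp [dyadicStepLp, hn, hm, mul_comm]

theorem norm_dyadicStepLp_sq (hT : 0 < T) (n : ℕ) :
    ‖dyadicStepLp T W n‖ ^ 2 = 2 * dyadicEnergy T W n := by
  rw [← real_inner_self_eq_norm_sq, inner_dyadicStepLp hT le_rfl]

theorem cauchySeq_dyadicStepLp (hT : 0 < T) (hE : BddAbove (range (dyadicEnergy T W))) :
    CauchySeq (dyadicStepLp T W) := by
  refine cauchySeq_of_inner_eq_norm_sq (fun n m hnm => ?_) ?_
  · rw [inner_dyadicStepLp hT hnm, norm_dyadicStepLp_sq hT]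
  · obtain ⟨M, hM⟩ := hE
    refine ⟨2 * M, forall_mem_range.mpr fun n => ?_⟩
    rw [norm_dyadicStepLp_sq hT]
    linarith [hM (mem_range_self n)]

theorem setIntegral_dyadicStepLp (hT : 0 < T) {n m j : ℕ} (hnm : n ≤ m) (hj : j ≤ 2 ^ n) :
    ∫ x in Ioc 0 (dyadicPoint T n j), dyadicStepLp T W m x ∂volume.restrict (Ioc 0 T)
      = W (dyadicPoint T n j) - W 0 := by
  have hd := dyadicPoint_mem_Icc hT hj
  rw [dyadicStepLp, integral_congr_ae (ae_restrict_of_ae (memLp_dyadicStep T W m).coeFn_toLp),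
    Measure.restrict_restrict_of_subset (Ioc_subset_Ioc_right hd.2), ← integral_of_le hd.1,
    intervalIntegral_dyadicStep_of_le hT hnm hj]

theorem exists_L2_primitive_of_bddAbove_dyadicEnergy (hT : 0 < T)
    (hE : BddAbove (range (dyadicEnergy T W))) :
    ∃ φ : ℝ → ℝ, Measurable φ ∧ MemLp φ 2 (volume.restrict (Ioc 0 T)) ∧
      (∀ n j, j ≤ 2 ^ n → ∫ x in 0..dyadicPoint T n j, φ x = W (dyadicPoint T n j) - W 0) ∧
      Tendsto (dyadicEnergy T W) atTop (𝓝 (1 / 2 * ∫ x in 0..T, φ x ^ 2)) := by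
  obtain ⟨G, hG⟩ := cauchySeq_tendsto_of_complete (cauchySeq_dyadicStepLp hT hE)
  refine ⟨G, (Lp.stronglyMeasurable G).measurable, Lp.memLp G, fun n j hj => ?_, ?_⟩
  · have hd := dyadicPoint_mem_Icc hT hj
    have hlim := tendsto_setIntegral_of_tendsto_L2 hG measurableSet_Ioc
      (s := Ioc 0 (dyadicPoint T n j)) (measure_ne_top _ _)
    rw [Measure.restrict_restrict_of_subset (Ioc_subset_Ioc_right hd.2)] at hlim
    rw [integral_of_le hd.1]
    refine tendsto_nhds_unique hlim (tendsto_const_nhds.congr' ?_)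
    filter_upwards [eventually_ge_atTop n] with m hm
    rw [← setIntegral_dyadicStepLp hT hm hj,
      Measure.restrict_restrict_of_subset (Ioc_subset_Ioc_right hd.2)]
  · have hnorm : ‖G‖ ^ 2 = ∫ x in 0..T, G x ^ 2 := by
      rw [← real_inner_self_eq_norm_sq, L2.inner_def, integral_of_le hT.le]
      simp [sq]
    have hlim := (hG.norm.pow 2).const_mul (1 / 2)
    simp only [norm_dyadicStepLp_sq hT, hnorm] at hlim
    simpa using hlim

end L2

/-- **Finite partition energy implies absolute continuity with `L²` derivative.**
Let `T > 0` and let `W : [0,T] → ℝ` be continuous with `W(0) = 0`, and suppose the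
partition Dirichlet energy
`S := sup Σ_{i<k} (W(t_{i+1}) − W(t_i))²/(2(t_{i+1} − t_i))`,
the supremum being over all `k ∈ ℕ` and all partitions `0 = t₀ < t₁ < ⋯ < t_k ≤ T`,
is finite. Then there is a measurable `f : ℝ → ℝ`, square-integrable on `[0,T]`, with
`W(t) = ∫₀^t f(s) ds` for every `t ∈ [0,T]` and `(1/2)·∫₀^T f(s)² ds = S`. -/
theorem finite_energy_absolutely_continuous (T : ℝ) (hT : 0 < T)
    (W : ℝ → ℝ) (hW : ContinuousOn W (Set.Icc 0 T)) (hW0 : W 0 = 0)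
    (S : ℝ)
    (hS : (⨆ (k : ℕ) (t : Fin (k+1) → ℝ) (_ : StrictMono t) (_ : t 0 = 0)
        (_ : t (Fin.last k) ≤ T),
      (((∑ i : Fin k,
          (W (t i.succ) - W (t i.castSucc)) ^ 2 /
            (2 * (t i.succ - t i.castSucc))) : ℝ) : EReal)) = (S : EReal)) :
    ∃ f : ℝ → ℝ, Measurable f ∧
      IntegrableOn (fun s => f s ^ 2) (Set.Icc 0 T) ∧
      (∀ t ∈ Set.Icc (0:ℝ) T, W t = ∫ s in (0:ℝ)..t, f s) ∧
      (1 / 2) * (∫ s in (0:ℝ)..T, f s ^ 2) = S := by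
  have hS_ge : ∀ k (t : Fin (k + 1) → ℝ), StrictMono t → t 0 = 0 → t (Fin.last k) ≤ T →
      partitionEnergy W t ≤ S := fun k t h₁ h₂ h₃ => by
    rw [← EReal.coe_le_coe_iff, ← hS]
    exact le_iSup₂_of_le k t (le_iSup₂_of_le h₁ h₂ (le_iSup_of_le h₃ le_rfl))
  have hE : ∀ n, dyadicEnergy T W n ≤ S := fun n =>
    hS_ge _ _ (fun _ _ h => strictMono_dyadicPoint hT n h) (by simp) (by simp)
  obtain ⟨φ, hφm, hφ2, hgrid, hlim⟩ :=
    exists_L2_primitive_of_bddAbove_dyadicEnergy hT ⟨S, forall_mem_range.mpr hE⟩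
  have hφ : IntegrableOn φ (Icc 0 T) :=
    (integrableOn_Icc_iff_integrableOn_Ioc).mpr (hφ2.integrable one_le_two)
  have hWφ : EqOn W (fun t => ∫ s in 0..t, φ s) (Icc 0 T) := by
    refine eqOn_Icc_of_eq_dyadicPoint hT hW ?_ fun n j hj => by rw [hgrid n j hj, hW0, sub_zero]
    simpa [uIcc_of_le hT.le] using
      continuousOn_primitive_interval (hφ.mono_set (uIcc_of_le hT.le).subset)
  refine ⟨φ, hφm, (integrableOn_Icc_iff_integrableOn_Ioc).mpr hφ2.integrable_sq, hWφ,
    le_antisymm (le_of_tendsto' hlim hE) ?_⟩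
  rw [← EReal.coe_le_coe_iff, ← hS]
  refine iSup₂_le fun k t => iSup₂_le fun h₁ h₂ => iSup_le fun h₃ => EReal.coe_le_coe_iff.mpr ?_
  exact partitionEnergy_le_of_eq_primitive h₁ h₂.ge h₃
    ((intervalIntegrable_iff_integrableOn_Icc_of_le hT.le).mpr hφ)
    ((intervalIntegrable_iff_integrableOn_Ioc_of_le hT.le).mpr hφ2.integrable_sq) hWφ
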